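/- arXiv:1101.1934 — 2 statements merged into one kernel-verified Lean document; each statement's English description precedes it below -/
import Mathlib

section
/- For any two output sequences generated by (possibly different) messages in a variable-length feedback code over a DMC with minimum transition probability λ > 0, the likelihoods satisfy P(Y^n = y^n | M = m) ≥ (λ/(1−λ))^n · P(Y^n = y^n | M = m̃) for all messages m, m̃ and all y^n. -/
/-! Every channel transition has probability at least `λ` and, since each row of `W` sums to `1`
and some other output has probability at least `λ`, at most `1 - λ`. So at every time step,
whatever inputs the feedback encoder chooses for the two messages, the transition probabilities of
the observed output differ by a factor of at most `(1 - λ) / λ`, and a likelihood of a history of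
length `n` is a product of `n` transitions. -/

open scoped BigOperators

noncomputable section

/-- Likelihood of an output history (stored in reverse chronological order: head is the most
recent output) given the message `m`, for a variable-length feedback code with encoder
`enc` (mapping the message and the past outputs to the next channel input) over the
channel `W`. -/
def lik {X Y Msg : Type*} (W : X → Y → ℝ) (enc : Msg → List Y → X) (m : Msg) :
    List Y → ℝ
  | [] => 1
  | y :: ys => lik W enc m ys * W (enc m ys) y

open Finset

section Likelihood

variable {X Y Msg : Type*} (W : X → Y → ℝ) (enc : Msg → List Y → X)

theorem lik_nonneg (hW : ∀ x y, 0 ≤ W x y) (m : Msg) : ∀ ys : List Y, 0 ≤ lik W enc m ys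
  | [] => zero_le_one
  | _ :: ys => mul_nonneg (lik_nonneg hW m ys) (hW _ _)

theorem pow_length_mul_lik_le_lik {r : ℝ} (hr : 0 ≤ r) (hW : ∀ x y, 0 ≤ W x y)
    (hstep : ∀ x x' y, r * W x' y ≤ W x y) (m m' : Msg) :
    ∀ ys : List Y, r ^ ys.length * lik W enc m' ys ≤ lik W enc m ys
  | [] => by simp [lik]
  | y :: ys => calc
      r ^ (y :: ys).length * lik W enc m' (y :: ys)
          = (r ^ ys.length * lik W enc m' ys) * (r * W (enc m' ys) y) := by
        simp only [lik, List.length_cons, pow_succ]; ring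
      _ ≤ lik W enc m ys * W (enc m ys) y :=
        mul_le_mul (pow_length_mul_lik_le_lik hr hW hstep m m' ys) (hstep _ _ _)
          (mul_nonneg hr (hW _ _)) (lik_nonneg W enc hW m ys)

end Likelihood

section Stochastic

variable {Y : Type*} [Fintype Y] {p : Y → ℝ}

theorem le_one_of_sum_eq_one (hp : ∀ y, 0 ≤ p y) (hsum : ∑ y, p y = 1) (y : Y) : p y ≤ 1 :=
  hsum ▸ single_le_sum (fun z _ => hp z) (mem_univ y)

theorem le_one_sub_of_sum_eq_one (hp : ∀ y, 0 ≤ p y) (hsum : ∑ y, p y = 1) {y z : Y}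
    (hyz : y ≠ z) : p y ≤ 1 - p z := by
  have := add_le_sum (fun i _ => hp i) (mem_univ y) (mem_univ z) hyz
  linarith

theorem nontrivial_of_lt_one (hsum : ∑ y, p y = 1) {y : Y} (hy : p y < 1) : Nontrivial Y := by
  by_contra h
  rw [not_nontrivial_iff_subsingleton] at h
  rw [Fintype.sum_subsingleton p y] at hsum
  exact hy.ne hsum

end Stochastic

theorem div_one_sub_mul_le_of_min {X Y : Type*} [Fintype Y] {W : X → Y → ℝ} {lam : ℝ}
    (hlam : 0 ≤ lam) (hlow : ∀ x y, lam ≤ W x y) (hmin : ∃ x y, W x y = lam)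
    (hrow : ∀ x, ∑ y, W x y = 1) (x : X) (y : Y) : lam / (1 - lam) * W x y ≤ lam := by
  have hW : ∀ x y, 0 ≤ W x y := fun x y => hlam.trans (hlow x y)
  obtain ⟨x₀, y₀, hx₀⟩ := hmin
  rcases (hx₀ ▸ le_one_of_sum_eq_one (hW x₀) (hrow x₀) y₀).eq_or_lt with rfl | hlt
  · simp -- the ratio is `1 / 0 = 0` in Lean
  -- `λ < 1` forces a second output letter, which caps every transition at `1 - λ`
  have : Nontrivial Y := nontrivial_of_lt_one (hrow x₀) (hx₀.trans_lt hlt)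
  obtain ⟨z, hzy⟩ := exists_ne y
  calc lam / (1 - lam) * W x y
      ≤ lam / (1 - lam) * (1 - lam) :=
        mul_le_mul_of_nonneg_left
          ((le_one_sub_of_sum_eq_one (hW x) (hrow x) hzy.symm).trans (sub_le_sub_left (hlow x z) 1))
          (div_nonneg hlam (sub_nonneg.2 hlt.le))
    _ = lam := div_mul_cancel₀ lam (sub_ne_zero.2 hlt.ne')

theorem likelihood_ratio_bound_general {X Y Msg : Type*} [Fintype Y]
    (W : X → Y → ℝ) (lam : ℝ) (hlam : 0 < lam)
    (hlow : ∀ x y, lam ≤ W x y) (hmin : ∃ x y, W x y = lam)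
    (hrow : ∀ x, ∑ y, W x y = 1)
    (enc : Msg → List Y → X) :
    ∀ (m m' : Msg) (ys : List Y),
      (lam / (1 - lam)) ^ ys.length * lik W enc m' ys ≤ lik W enc m ys := by
  have hW : ∀ x y, 0 ≤ W x y := fun x y => hlam.le.trans (hlow x y)
  have hlam_le_one : lam ≤ 1 := by
    obtain ⟨x₀, y₀, hx₀⟩ := hmin
    exact hx₀ ▸ le_one_of_sum_eq_one (hW x₀) (hrow x₀) y₀
  exact pow_length_mul_lik_le_lik W enc (div_nonneg hlam.le (sub_nonneg.2 hlam_le_one)) hW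
    fun x x' y => (div_one_sub_mul_le_of_min hlam.le hlow hmin hrow x' y).trans (hlow x y)

/-- Likelihood-ratio bound: for a variable-length feedback code over a DMC with minimum
transition probability `λ > 0`, the likelihoods of any output history under any two
messages satisfy `P(Y^n = y^n | M = m) ≥ (λ/(1-λ))^n ⬝ P(Y^n = y^n | M = m̃)`. -/
theorem likelihood_ratio_bound {X Y Msg : Type*} [Fintype X] [Fintype Y]
    (W : X → Y → ℝ) (lam : ℝ) (hlam : 0 < lam)
    (hlow : ∀ x y, lam ≤ W x y) (hmin : ∃ x y, W x y = lam)
    (hrow : ∀ x, ∑ y, W x y = 1)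
    (enc : Msg → List Y → X) :
    ∀ (m m' : Msg) (ys : List Y),
      (lam / (1 - lam)) ^ ys.length * lik W enc m' ys ≤ lik W enc m ys :=
  likelihood_ratio_bound_general W lam hlam hlow hmin hrow enc

end
end

section
/- Consider a variable-length block code with message set M = M₁ × ⋯ × M_ℓ on a DMC with minimum transition probability λ > 0, P(τ < ∞) = 1. For each i, the probability P_e(i) := P((M̂₁,…,M̂_i) ≠ (M₁,…,M_i)) satisfies P_e(i) ≥ ((|M^i|−1)/|M^i|) · E[(λ/(1−λ))^τ], where |M^i| = |M₁|⋯|M_i|. Consequently every P_e(i) is strictly positive. -/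
/-!
Fix an output history `ys` of length `n` and put `r = λ / (1 - λ)`. Every transition
probability lies in `[λ, 1 - λ]`, so `r ^ n ⬝ lik m ys ≤ λ ^ n ≤ lik m' ys` for any two
messages `m, m'`. Whatever the decoder outputs on `ys`, a fraction `(|M^i| - 1) / |M^i|` of all
messages disagree with it on the first `i` sub-messages; averaging the ratio bound over them
gives the error bound history by history, and summing over the stopping set gives the theorem.
Positivity: every likelihood is at least `λ ^ n > 0`, and some message is always decoded wrongly.
-/

open scoped BigOperators

noncomputable section

open Finset

theorem card_mul_mul_sum_le_card_mul_sum {ι : Type*} [Fintype ι] (f : ι → ℝ) (s : Finset ι)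
    {c : ℝ} (h : ∀ a b, c * f a ≤ f b) :
    (#s : ℝ) * (c * ∑ a, f a) ≤ Fintype.card ι * ∑ b ∈ s, f b :=
  calc (#s : ℝ) * (c * ∑ a, f a) = ∑ b ∈ s, ∑ a, c * f a := by
        rw [sum_const, nsmul_eq_mul, mul_sum]
    _ ≤ ∑ b ∈ s, ∑ _a : ι, f b := by gcongr with b _ a; exact h a b
    _ = Fintype.card ι * ∑ b ∈ s, f b := by
        simp only [sum_const, card_univ, nsmul_eq_mul, mul_sum]

theorem mul_tsum_le_tsum_of_mul_le {α : Type*} {k : ℝ} {e g : α → ℝ} (hg : Summable g)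
    (hg0 : ∀ a, 0 ≤ g a) (h : ∀ a, k * e a ≤ g a) : k * ∑' a, e a ≤ ∑' a, g a := by
  by_cases he : Summable e
  · rw [← tsum_mul_left]
    exact (he.mul_left k).tsum_le_tsum h hg
  · rw [tsum_eq_zero_of_not_summable he, mul_zero]
    exact tsum_nonneg hg0

theorem mul_sum_le_sum_ite_of_mul_card_eq {κ : Type*} [Fintype κ] (Q : κ → Prop)
    [DecidablePred Q] {N : ℝ} (hN : N * #{a | Q a} = Fintype.card κ) (hQ : ∃ a, Q a)
    (f : κ → ℝ) {c : ℝ} (h : ∀ a b, c * f a ≤ f b) :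
    (N - 1) / N * (c * ∑ a, f a) ≤ ∑ a, if Q a then 0 else f a := by
  set A : Finset κ := {a | Q a}
  set s : Finset κ := {a | ¬ Q a}
  have hsum : (∑ a, if Q a then 0 else f a) = ∑ a ∈ s, f a := by
    rw [sum_filter]
    exact sum_congr rfl fun a _ => by by_cases ha : Q a <;> simp [ha]
  have hcard : (#s : ℝ) + #A = Fintype.card κ := by
    rw [add_comm]
    exact_mod_cast card_filter_add_card_filter_not (s := univ) Q
  have hA : (0 : ℝ) < #A := by
    obtain ⟨a, ha⟩ := hQ
    exact_mod_cast card_pos.mpr ⟨a, by simp [A, ha]⟩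
  have hN0 : 0 < N := pos_of_mul_pos_left (by rw [hN, ← hcard]; positivity) hA.le
  have hs : (#s : ℝ) = N * #A - #A := by linarith
  rw [hsum, div_mul_eq_mul_div, div_le_iff₀ hN0]
  refine le_of_mul_le_mul_left ?_ hA
  calc #A * ((N - 1) * (c * ∑ a, f a)) = #s * (c * ∑ a, f a) := by rw [hs]; ring
    _ ≤ Fintype.card κ * ∑ a ∈ s, f a := card_mul_mul_sum_le_card_mul_sum f s h
    _ = #A * ((∑ a ∈ s, f a) * N) := by rw [← hN]; ring

section Agree

variable {ι : Type*} [DecidableEq ι] {M : ι → Type*} (p : ι → Prop) (d : ∀ j, M j)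

theorem prod_card_mul_card_filter_agree [Fintype ι] [∀ j, Fintype (M j)] [DecidablePred p]
    [DecidablePred fun m : (∀ j, M j) => ∀ j, p j → d j = m j] :
    (∏ j ∈ univ.filter p, Fintype.card (M j)) * #{m : ∀ j, M j | ∀ j, p j → d j = m j}
      = Fintype.card (∀ j, M j) := by
  have hfilter : ({m : ∀ j, M j | ∀ j, p j → d j = m j} : Finset _)
      = Fintype.piFinset fun j => if p j then {d j} else univ := by
    ext m
    simp only [mem_filter, mem_univ, true_and, Fintype.mem_piFinset]
    refine forall_congr' fun j => ?_
    split_ifs with hj <;> simp [hj, eq_comm]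
  have hcard : ∀ j, #(if p j then {d j} else univ) = if p j then 1 else Fintype.card (M j) :=
    fun j => by split_ifs <;> simp
  rw [hfilter, Fintype.card_piFinset, prod_congr rfl fun j _ => hcard j, prod_ite, prod_const_one,
    one_mul, Fintype.card_pi, prod_filter_mul_prod_filter_not]

theorem exists_not_forall_agree {j₀ : ι} (hj₀ : p j₀) [Nontrivial (M j₀)] :
    ∃ m : ∀ j, M j, ¬ ∀ j, p j → d j = m j := by
  obtain ⟨x, hx⟩ := exists_ne (d j₀)
  exact ⟨Function.update d j₀ x, fun hagree => hx (by simpa using (hagree j₀ hj₀).symm)⟩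

end Agree

section Channel

variable {X Y Msg : Type*} {W : X → Y → ℝ} {enc : Msg → List Y → X}

theorem pow_le_lik {a : ℝ} (ha : 0 ≤ a) (hlow : ∀ x y, a ≤ W x y) (m : Msg) :
    ∀ ys : List Y, a ^ ys.length ≤ lik W enc m ys
  | [] => by simp [lik]
  | y :: ys => by
      rw [lik, List.length_cons, pow_succ]
      exact mul_le_mul (pow_le_lik ha hlow m ys) (hlow _ _) ha
        ((pow_nonneg ha _).trans (pow_le_lik ha hlow m ys))

theorem lik_pos {lam : ℝ} (hlam : 0 < lam) (hlow : ∀ x y, lam ≤ W x y) (m : Msg) (ys : List Y) :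
    0 < lik W enc m ys :=
  (pow_pos hlam _).trans_le (pow_le_lik hlam.le hlow m ys)

theorem pow_mul_lik_le {r a : ℝ} (hr : 0 ≤ r) (hW : ∀ x y, 0 ≤ W x y)
    (hrW : ∀ x y, r * W x y ≤ a) (m : Msg) :
    ∀ ys : List Y, r ^ ys.length * lik W enc m ys ≤ a ^ ys.length
  | [] => by simp [lik]
  | y :: ys => by
      have hstep : 0 ≤ r * W (enc m ys) y := mul_nonneg hr (hW _ _)
      calc r ^ (y :: ys).length * lik W enc m (y :: ys)
          = (r ^ ys.length * lik W enc m ys) * (r * W (enc m ys) y) := by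
            rw [lik, List.length_cons]; ring
        _ ≤ a ^ ys.length * a :=
            mul_le_mul (pow_mul_lik_le hr hW hrW m ys) (hrW _ _) hstep
              (pow_nonneg (hstep.trans (hrW _ _)) _)
        _ = a ^ (y :: ys).length := by rw [List.length_cons, pow_succ]

variable [Fintype Y] {lam : ℝ}

theorem le_one_of_sum_eq_one_s8 (hW : ∀ x y, 0 ≤ W x y) (hrow : ∀ x, ∑ y, W x y = 1) (x : X)
    (y : Y) : W x y ≤ 1 :=
  hrow x ▸ single_le_sum (fun y _ => hW x y) (mem_univ y)

/-- A transition probability is at most `1 - λ` unless the output alphabet is a single letter,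
which forces `λ = 1` and `λ / (1 - λ) = 0`. -/
theorem div_one_sub_mul_le (hlam : 0 ≤ lam) (hlow : ∀ x y, lam ≤ W x y)
    (hmin : ∃ x y, W x y = lam) (hrow : ∀ x, ∑ y, W x y = 1) (x : X) (y : Y) :
    lam / (1 - lam) * W x y ≤ lam := by
  classical
  obtain ⟨x₀, y₀, hx₀y₀⟩ := hmin
  rcases eq_or_ne lam 1 with rfl | hne
  · simp
  obtain ⟨y', hy'⟩ : ∃ y', y' ≠ y := by
    by_contra! hall
    have hrow₀ := hrow x₀
    rw [Fintype.sum_eq_single y₀ fun z hz => absurd ((hall z).trans (hall y₀).symm) hz,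
      hx₀y₀] at hrow₀
    exact hne hrow₀
  have hpair : W x y + W x y' ≤ 1 := by
    rw [← hrow x, ← sum_pair hy'.symm]
    exact sum_le_sum_of_subset_of_nonneg (subset_univ _)
      fun z _ _ => hlam.trans (hlow x z)
  have hW : W x y ≤ 1 - lam := by linarith [hlow x y']
  have hpos : 0 < 1 - lam := by linarith [hlow x y]
  calc lam / (1 - lam) * W x y ≤ lam / (1 - lam) * (1 - lam) := by gcongr
    _ = lam := div_mul_cancel₀ _ hpos.ne'

theorem lik_ratio (hlam : 0 ≤ lam) (hlow : ∀ x y, lam ≤ W x y)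
    (hmin : ∃ x y, W x y = lam) (hrow : ∀ x, ∑ y, W x y = 1) (m m' : Msg) (ys : List Y) :
    (lam / (1 - lam)) ^ ys.length * lik W enc m ys ≤ lik W enc m' ys := by
  have hW : ∀ x y, 0 ≤ W x y := fun x y => hlam.trans (hlow x y)
  have hlam1 : lam ≤ 1 := by
    obtain ⟨x₀, y₀, hx₀y₀⟩ := hmin
    exact hx₀y₀ ▸ le_one_of_sum_eq_one_s8 hW hrow x₀ y₀
  exact (pow_mul_lik_le (div_nonneg hlam (sub_nonneg.mpr hlam1)) hW
    (div_one_sub_mul_le hlam hlow hmin hrow) m ys).trans (pow_le_lik hlam hlow m' ys)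

end Channel

section FeedbackCode

variable {X Y : Type*} {ℓ : ℕ} {Mi : Fin ℓ → Type*} [∀ j, Fintype (Mi j)]
  [∀ j, DecidableEq (Mi j)] {W : X → Y → ℝ} {lam : ℝ} {enc : ((j : Fin ℓ) → Mi j) → List Y → X}

theorem mul_sum_lik_le_sum_lik_ite [Fintype Y] (hlam : 0 ≤ lam) (hlow : ∀ x y, lam ≤ W x y)
    (hmin : ∃ x y, W x y = lam) (hrow : ∀ x, ∑ y, W x y = 1) (i : ℕ) (d : (j : Fin ℓ) → Mi j)
    (ys : List Y) :
    ((∏ j ∈ univ.filter (fun j : Fin ℓ => (j : ℕ) < i), (Fintype.card (Mi j) : ℝ)) - 1) /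
        (∏ j ∈ univ.filter (fun j : Fin ℓ => (j : ℕ) < i), (Fintype.card (Mi j) : ℝ)) *
        ((lam / (1 - lam)) ^ ys.length * ∑ m, lik W enc m ys)
      ≤ ∑ m, if ∀ j : Fin ℓ, (j : ℕ) < i → d j = m j then 0 else lik W enc m ys := by
  refine mul_sum_le_sum_ite_of_mul_card_eq (fun m => ∀ j : Fin ℓ, (j : ℕ) < i → d j = m j)
    ?_ ⟨d, fun _ _ => rfl⟩ (fun m => lik W enc m ys) (lik_ratio hlam hlow hmin hrow · · ys)
  exact_mod_cast prod_card_mul_card_filter_agree (fun j : Fin ℓ => (j : ℕ) < i) d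

theorem sum_lik_ite_pos (hlam : 0 < lam) (hlow : ∀ x y, lam ≤ W x y)
    (hcard : ∀ j, 2 ≤ Fintype.card (Mi j)) {i : ℕ} (hi : 1 ≤ i) (hiℓ : i ≤ ℓ)
    (d : (j : Fin ℓ) → Mi j) (ys : List Y) :
    0 < ∑ m, if ∀ j : Fin ℓ, (j : ℕ) < i → d j = m j then 0 else lik W enc m ys := by
  have hℓ : 0 < ℓ := by omega
  have : Nontrivial (Mi ⟨0, hℓ⟩) := Fintype.one_lt_card_iff_nontrivial.mp (hcard ⟨0, hℓ⟩)
  obtain ⟨m₀, hm₀⟩ := exists_not_forall_agree (fun j : Fin ℓ => (j : ℕ) < i) d (j₀ := ⟨0, hℓ⟩) hi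
  refine sum_pos' (fun m _ => ite_nonneg le_rfl (lik_pos hlam hlow m ys).le)
    ⟨m₀, mem_univ _, ?_⟩
  rw [if_neg hm₀]
  exact lik_pos hlam hlow m₀ ys

end FeedbackCode

theorem submessage_error_pos_general {X Y : Type*} [Fintype Y]
    {ℓ : ℕ} {Mi : Fin ℓ → Type*} [∀ j, Fintype (Mi j)] [∀ j, DecidableEq (Mi j)]
    (W : X → Y → ℝ) (lam : ℝ) (hlam : 0 < lam)
    (hlow : ∀ x y, lam ≤ W x y) (hmin : ∃ x y, W x y = lam)
    (hrow : ∀ x, ∑ y, W x y = 1)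
    (enc : ((j : Fin ℓ) → Mi j) → List Y → X) (S : Set (List Y))
    (dec : List Y → (j : Fin ℓ) → Mi j)
    (hcard : ∀ j, 2 ≤ Fintype.card (Mi j))
    (hstop : ∑' ys : S, (Fintype.card ((j : Fin ℓ) → Mi j) : ℝ)⁻¹ *
        ∑ m, lik W enc m (ys : List Y) = 1) :
    ∀ i : ℕ, 1 ≤ i → i ≤ ℓ →
      let Ni : ℝ := ∏ j ∈ Finset.univ.filter (fun j : Fin ℓ => (j : ℕ) < i),
          (Fintype.card (Mi j) : ℝ)
      let Pei : ℝ := ∑' ys : S, (Fintype.card ((j : Fin ℓ) → Mi j) : ℝ)⁻¹ *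
          ∑ m, (if ∀ j : Fin ℓ, (j : ℕ) < i → dec (ys : List Y) j = m j then 0
                else lik W enc m (ys : List Y))
      ((Ni - 1) / Ni) *
          (∑' ys : S, (Fintype.card ((j : Fin ℓ) → Mi j) : ℝ)⁻¹ *
            (∑ m, lik W enc m (ys : List Y)) * (lam / (1 - lam)) ^ (ys : List Y).length)
        ≤ Pei ∧ 0 < Pei := by
  intro i hi hiℓ Ni Pei
  have hc : 0 < (Fintype.card ((j : Fin ℓ) → Mi j) : ℝ)⁻¹ := by
    have : ∀ j, Nonempty (Mi j) := fun j => Fintype.card_pos_iff.mp (by have := hcard j; omega)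
    positivity
  have hT : Summable fun ys : S =>
      (Fintype.card ((j : Fin ℓ) → Mi j) : ℝ)⁻¹ * ∑ m, lik W enc m (ys : List Y) := by
    by_contra h
    rw [tsum_eq_zero_of_not_summable h] at hstop
    exact zero_ne_one hstop
  have hg0 : ∀ ys : S, 0 ≤ (Fintype.card ((j : Fin ℓ) → Mi j) : ℝ)⁻¹ *
      ∑ m, (if ∀ j : Fin ℓ, (j : ℕ) < i → dec ys j = m j then 0 else lik W enc m ys) :=
    fun ys => mul_nonneg hc.le <| sum_nonneg fun m _ =>
      ite_nonneg le_rfl (lik_pos hlam hlow m ys).le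
  have hg : Summable fun ys : S => (Fintype.card ((j : Fin ℓ) → Mi j) : ℝ)⁻¹ *
      ∑ m, (if ∀ j : Fin ℓ, (j : ℕ) < i → dec ys j = m j then 0 else lik W enc m ys) :=
    hT.of_nonneg_of_le hg0 fun ys => mul_le_mul_of_nonneg_left
      (sum_le_sum fun m _ => by split_ifs; exacts [(lik_pos hlam hlow m ys).le, le_rfl]) hc.le
  refine ⟨mul_tsum_le_tsum_of_mul_le hg hg0 fun ys => Eq.trans_le (by ring)
    (mul_le_mul_of_nonneg_left (mul_sum_lik_le_sum_lik_ite hlam.le hlow hmin hrow i _ _) hc.le), ?_⟩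
  obtain ⟨ys₀⟩ : Nonempty S := by
    by_contra h
    rw [not_nonempty_iff] at h
    simp at hstop
  exact hg.tsum_pos hg0 ys₀ (mul_pos hc (sum_lik_ite_pos hlam hlow hcard hi hiℓ _ _))

/-- For a variable-length feedback code with product message set
`M = M₁ × ⋯ × M_ℓ` on a DMC with minimum transition probability `λ > 0` and
`P(τ < ∞) = 1`, the probability `P_e(i)` of decoding the first `i` sub-messages
erroneously satisfies `P_e(i) ≥ ((|M^i|-1)/|M^i|) ⬝ E[(λ/(1-λ))^τ]`, where
`|M^i| = |M₁| ⋯ |M_i|`; consequently every `P_e(i)` is strictly positive. -/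
theorem submessage_error_pos {X Y : Type*} [Fintype X] [Fintype Y]
    {ℓ : ℕ} {Mi : Fin ℓ → Type*} [∀ j, Fintype (Mi j)] [∀ j, DecidableEq (Mi j)]
    (W : X → Y → ℝ) (lam : ℝ) (hlam : 0 < lam)
    (hlow : ∀ x y, lam ≤ W x y) (hmin : ∃ x y, W x y = lam)
    (hrow : ∀ x, ∑ y, W x y = 1)
    (enc : ((j : Fin ℓ) → Mi j) → List Y → X) (S : Set (List Y))
    (dec : List Y → (j : Fin ℓ) → Mi j)
    (hcard : ∀ j, 2 ≤ Fintype.card (Mi j))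
    (hanti : ∀ ys ∈ S, ∀ zs ∈ S, ys <:+ zs → ys = zs)
    (hstop : ∑' ys : S, (Fintype.card ((j : Fin ℓ) → Mi j) : ℝ)⁻¹ *
        ∑ m, lik W enc m (ys : List Y) = 1) :
    ∀ i : ℕ, 1 ≤ i → i ≤ ℓ →
      let Ni : ℝ := ∏ j ∈ Finset.univ.filter (fun j : Fin ℓ => (j : ℕ) < i),
          (Fintype.card (Mi j) : ℝ)
      let Pei : ℝ := ∑' ys : S, (Fintype.card ((j : Fin ℓ) → Mi j) : ℝ)⁻¹ *
          ∑ m, (if ∀ j : Fin ℓ, (j : ℕ) < i → dec (ys : List Y) j = m j then 0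
                else lik W enc m (ys : List Y))
      ((Ni - 1) / Ni) *
          (∑' ys : S, (Fintype.card ((j : Fin ℓ) → Mi j) : ℝ)⁻¹ *
            (∑ m, lik W enc m (ys : List Y)) * (lam / (1 - lam)) ^ (ys : List Y).length)
        ≤ Pei ∧ 0 < Pei :=
  submessage_error_pos_general W lam hlam hlow hmin hrow enc S dec hcard hstop

end
end
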